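/- For every natural number t ≥ 0, the t-th power of the matrix product T·R satisfies the closed form (T·R)^t = I + t·P + t²·N, where P = [[-3/2,-1/2,1/2],[2,0,-2],[-1/2,1/2,3/2]] and N = [[1/2,1/2,1/2],[-1,-1,-1],[1/2,1/2,1/2]]. -/

import Mathlib

/-!
Since `P ^ 3 = 0`, the exponential series of `P` stops after the quadratic term:
`T * R = exp P = 1 + P + N`, hence `(T * R) ^ t = exp (t • P) = 1 + t • P + t ^ 2 • N`.
-/

open Matrix

def R : Matrix (Fin 3) (Fin 3) ℝ := !![0,0,-1; 1,0,-1; 0,1,-1]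

def T : Matrix (Fin 3) (Fin 3) ℝ := !![-1,0,0; 2,1,0; -4,0,1]

/-- `P = log(T·R)`. -/
noncomputable def P : Matrix (Fin 3) (Fin 3) ℝ := !![-3/2,-1/2,1/2; 2,0,-2; -1/2,1/2,3/2]

/-- `N = P²/2`. -/
noncomputable def N : Matrix (Fin 3) (Fin 3) ℝ := !![1/2,1/2,1/2; -1,-1,-1; 1/2,1/2,1/2]

namespace IsNilpotent

variable {A : Type*} [Ring A] [Module ℚ A]

theorem exp_nsmul {a : A} (ha : IsNilpotent a) (n : ℕ) : exp (n • a) = exp a ^ n := by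
  induction n with
  | zero => simp
  | succ n ih =>
    rw [succ_nsmul, exp_add_of_commute ((Commute.refl a).smul_left n) (ha.smul n) ha, ih,
      _root_.pow_succ]

theorem exp_eq_of_pow_three_eq_zero {a : A} (ha : a ^ 3 = 0) :
    exp a = 1 + a + (2⁻¹ : ℚ) • a ^ 2 := by
  simp [exp_eq_sum ha, Finset.sum_range_succ]

end IsNilpotent

theorem P_pow_three : P ^ 3 = 0 := by
  rw [pow_succ, pow_two, eta_fin_three 0]
  norm_num [P, mul_fin_three]

theorem N_eq_half_P_sq : N = (2⁻¹ : ℚ) • P ^ 2 := by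
  rw [← Rat.cast_smul_eq_qsmul ℝ, pow_two]
  norm_num [P, N, mul_fin_three, smul_of]

theorem T_mul_R_eq_exp_P : T * R = IsNilpotent.exp P := by
  rw [IsNilpotent.exp_eq_of_pow_three_eq_zero P_pow_three, ← N_eq_half_P_sq, one_fin_three]
  norm_num [T, R, P, N, mul_fin_three, of_add_of]

/-- Closed form for the powers of `T·R`: `(T·R)^t = I + t·P + t²·N`. -/
theorem TR_pow (t : ℕ) :
    (T * R) ^ t = 1 + (t : ℝ) • P + ((t : ℝ) ^ 2) • N := by
  have htP : ((t : ℝ) • P) ^ 3 = 0 := by rw [smul_pow, P_pow_three, smul_zero]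
  rw [T_mul_R_eq_exp_P, ← IsNilpotent.exp_nsmul ⟨3, P_pow_three⟩, ← Nat.cast_smul_eq_nsmul ℝ,
    IsNilpotent.exp_eq_of_pow_three_eq_zero htP, smul_pow, N_eq_half_P_sq, smul_comm]
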